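/- Let K be a simplicial complex on [m]. The quotient map Λ(ω₁,…,ω_m) ⊗ SR⟨K⟩ → R̄(K) := Λ(ω₁,…,ω_m) ⊗ SR⟨K⟩ / (y_i², ω_iy_i) is a quasi-isomorphism of differential graded algebras. -/

import Mathlib

/-!
STATEMENT 4.  The quotient map `Λ(ω₁,…,ω_m) ⊗ SR⟨K⟩ → R̄(K)` is a
quasi-isomorphism of differential graded algebras.

`Λ(ω) ⊗ SR⟨K⟩` is modelled by its monomial basis `(I, f)` ↔ `ω_I y^f`
(supported on pairs with `supp f ∈ K`), with differential
`d(ω_I y^f) = ∑_{i∈I} ±ω_{I∖i} y^{f+eᵢ}` and product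
`(ω_I y^f)(ω_{I'} y^{f'}) = ± ω_{I∪I'} y^{f+f'}` (zero when `I ∩ I' ≠ ∅` or the
`y`-support is a non-face).  `R̄(K) = Λ(ω)⊗SR⟨K⟩/(yᵢ², ωᵢyᵢ)` is modelled by its
monomial basis `(I, L)` ↔ `ω_I y_L` supported on pairs with `I ∩ L = ∅`, `L ∈ K`.
The quotient map `q` sends `ω_I y^f` to `ω_I y_{supp f}` when `f` is square-free
and `I ∩ supp f = ∅`, and to `0` otherwise.  The theorem: `q` is a map of dgas
(chain map, multiplicative on monomials) inducing an isomorphism on cohomology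
(restricted to the supported submodules, surjectivity and injectivity on `H`).
-/

open Finsupp

variable (k : Type) [CommRing k] (m : ℕ) (K : Finset (Fin m) → Prop) [DecidablePred K]

abbrev LSRMod (k : Type) [CommRing k] (m : ℕ) := (Finset (Fin m) × (Fin m →₀ ℕ)) →₀ k
abbrev RbarMod (k : Type) [CommRing k] (m : ℕ) := (Finset (Fin m) × Finset (Fin m)) →₀ k

/-- `∑_{i∈A} #{j∈B : j<i}`, the number of ω-inversions between `A` and `B`. -/
def invCount (A B : Finset (Fin m)) : ℕ := ∑ i ∈ A, (B.filter fun j => j < i).card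

noncomputable def dLSR : LSRMod k m →ₗ[k] LSRMod k m :=
  Finsupp.lift (LSRMod k m) k _ fun p =>
    ∑ i ∈ p.1,
      if K (insert i p.2.support) then
        Finsupp.single (p.1.erase i, p.2 + Finsupp.single i 1)
          ((-1 : k) ^ ((p.1.filter fun j => j ≤ i).card + 1))
      else 0

noncomputable def dRbar : RbarMod k m →ₗ[k] RbarMod k m :=
  Finsupp.lift (RbarMod k m) k _ fun p =>
    ∑ i ∈ p.1,
      if i ∉ p.2 ∧ K (insert i p.2) then
        Finsupp.single (p.1.erase i, insert i p.2)
          ((-1 : k) ^ ((p.1.filter fun j => j ≤ i).card + 1))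
      else 0

/-- Product on `Λ(ω)⊗SR⟨K⟩`. -/
noncomputable def mulLSR : LSRMod k m →ₗ[k] LSRMod k m →ₗ[k] LSRMod k m :=
  Finsupp.lift _ k _ fun p => Finsupp.lift (LSRMod k m) k _ fun q =>
    if Disjoint p.1 q.1 ∧ K (p.2 + q.2).support then
      Finsupp.single (p.1 ∪ q.1, p.2 + q.2) ((-1 : k) ^ invCount m p.1 q.1)
    else 0

/-- Product on `R̄(K)`: any repeated index gives `ωᵢ²`, `ωᵢyᵢ`, `yᵢωᵢ` or `yᵢ²`, hence `0`. -/
noncomputable def mulRbar : RbarMod k m →ₗ[k] RbarMod k m →ₗ[k] RbarMod k m :=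
  Finsupp.lift _ k _ fun p => Finsupp.lift (RbarMod k m) k _ fun q =>
    if Disjoint (p.1 ∪ p.2) (q.1 ∪ q.2) ∧ K (p.2 ∪ q.2) then
      Finsupp.single (p.1 ∪ q.1, p.2 ∪ q.2) ((-1 : k) ^ invCount m p.1 q.1)
    else 0

/-- The quotient map `Λ(ω)⊗SR⟨K⟩ → R̄(K)`. -/
noncomputable def qMap : LSRMod k m →ₗ[k] RbarMod k m :=
  Finsupp.lift (RbarMod k m) k _ fun p =>
    if (∀ i, p.2 i ≤ 1) ∧ Disjoint p.1 p.2.support then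
      Finsupp.single (p.1, p.2.support) 1
    else 0

/-!
`q` commutes with the differentials and the products by a computation on monomials. The
monomials of `R̄(K)` are the `ω_I y_L` with `L ∈ K` and `I ∩ L = ∅`; sending each to the same
monomial of `Λ(ω) ⊗ SR⟨K⟩` is a chain section `j` of `q`, so it suffices that `ker q` is acyclic.
It is spanned by the monomials `ω_I y^f` divisible by some `y_b²` or `ω_b y_b`, and the set of
such `b` is the same for every term `ω_{I∖i} y^{f+eᵢ}` of `d(ω_I y^f)`. With `b` the least one,
`h(ω_I y^f) = 0` if `b ∈ I` and `h(ω_I y^f) = ±ω_{I∪b} y^{f-e_b}` otherwise satisfies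
`dh + hd = id` on `ker q`.
-/

namespace Finsupp

variable {R α M : Type*} [Semiring R] [AddCommMonoid M] [Module R M]

theorem lift_single_apply (g : α → M) (a : α) (c : R) :
    lift M R α g (single a c) = c • g a := by
  simp [lift_apply, sum_single_index]

theorem apply_mem_of_mem_supported {F : (α →₀ R) →ₗ[R] M} {N : Submodule R M} {S : Set α}
    (h : ∀ a ∈ S, F (single a 1) ∈ N) {x : α →₀ R} (hx : x ∈ supported R R S) : F x ∈ N := by
  rw [supported_eq_span_single] at hx
  exact (Submodule.span_le (p := N.comap F)).mpr (by rintro _ ⟨a, ha, rfl⟩; exact h a ha) hx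

theorem eqOn_supported {F G : (α →₀ R) →ₗ[R] M} {S : Set α}
    (h : ∀ a ∈ S, F (single a 1) = G (single a 1)) {x : α →₀ R} (hx : x ∈ supported R R S) :
    F x = G x := by
  rw [supported_eq_span_single] at hx
  exact LinearMap.eqOn_span' (by rintro _ ⟨a, ha, rfl⟩; exact h a ha) hx

end Finsupp

section QuasiIso

variable {R A B : Type*} [Ring R] [AddCommGroup A] [Module R A] [AddCommGroup B] [Module R B]
  {dA : A →ₗ[R] A} {dB : B →ₗ[R] B} {q : A →ₗ[R] B} {j : B →ₗ[R] A}
  {A₀ : Submodule R A} {B₀ : Submodule R B}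

theorem exists_cycle_map_sub_eq_boundary_of_section (hjB : ∀ y ∈ B₀, j y ∈ A₀)
    (hdj : ∀ y ∈ B₀, dA (j y) = j (dB y)) (hqj : ∀ y ∈ B₀, q (j y) = y) :
    ∀ y ∈ B₀, dB y = 0 → ∃ x ∈ A₀, dA x = 0 ∧ ∃ z ∈ B₀, q x - y = dB z := by
  intro y hy hdy
  exact ⟨j y, hjB y hy, by rw [hdj y hy, hdy, map_zero], 0, B₀.zero_mem, by
    rw [hqj y hy, sub_self, map_zero]⟩

theorem exists_boundary_of_map_eq_boundary (hq : q ∘ₗ dA = dB ∘ₗ q)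
    (hqA : ∀ x ∈ A₀, q x ∈ B₀) (hjB : ∀ y ∈ B₀, j y ∈ A₀)
    (hdj : ∀ y ∈ B₀, dA (j y) = j (dB y)) (hqj : ∀ y ∈ B₀, q (j y) = y)
    (hker : ∀ u ∈ A₀, q u = 0 → dA u = 0 → ∃ w ∈ A₀, dA w = u) :
    ∀ x ∈ A₀, dA x = 0 → (∃ z ∈ B₀, q x = dB z) → ∃ w ∈ A₀, dA w = x := by
  rintro x hx hdx ⟨z, hz, hqx⟩
  have hqxB := hqA x hx
  obtain ⟨w, hw, hdw⟩ : ∃ w ∈ A₀, dA w = x - j (q x) := by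
    refine hker _ (sub_mem hx (hjB _ hqxB)) (by rw [map_sub, hqj _ hqxB, sub_self]) ?_
    rw [map_sub, hdj _ hqxB, ← LinearMap.comp_apply dB, ← hq, LinearMap.comp_apply, hdx,
      map_zero, map_zero, sub_zero]
  refine ⟨w + j z, add_mem hw (hjB z hz), ?_⟩
  rw [map_add, hdw, hdj z hz, ← hqx, sub_add_cancel]

end QuasiIso

section Exponents

variable {α : Type*} [DecidableEq α]

def sqfreeExp (L : Finset α) : α →₀ ℕ :=
  ⟨L, fun i => if i ∈ L then 1 else 0, fun i => by simp⟩

@[simp] theorem sqfreeExp_apply (L : Finset α) (i : α) :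
    sqfreeExp L i = if i ∈ L then 1 else 0 := rfl

@[simp] theorem support_sqfreeExp (L : Finset α) : (sqfreeExp L).support = L := rfl

theorem sqfreeExp_add_single {L : Finset α} {i : α} (h : i ∉ L) :
    sqfreeExp L + single i 1 = sqfreeExp (insert i L) := by
  ext j
  by_cases hj : j = i <;> simp_all [eq_comm]

theorem support_add_single_one (f : α →₀ ℕ) (i : α) :
    (f + single i 1).support = insert i f.support := by
  rw [Finsupp.support_add_eq_union, Finsupp.support_single _ one_ne_zero, Finset.union_comm,
    Finset.insert_eq]

theorem support_tsub_single_one {f : α →₀ ℕ} {b : α} (h : 2 ≤ f b) :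
    (f - single b 1).support = f.support := by
  ext i
  by_cases hi : i = b
  · subst hi; simp; omega
  · simp [Ne.symm hi]

/-- The indices `i` such that `y_i²` or `ω_i y_i` divides `ω_I y^f`: the monomial `ω_I y^f`
survives in `R̄(K)` exactly when this set is empty. -/
def badSet (I : Finset α) (f : α →₀ ℕ) : Finset α :=
  f.support.filter fun i => 2 ≤ f i ∨ i ∈ I

theorem mem_badSet {I : Finset α} {f : α →₀ ℕ} {i : α} :
    i ∈ badSet I f ↔ f i ≠ 0 ∧ (2 ≤ f i ∨ i ∈ I) := by
  simp [badSet]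

theorem badSet_eq_empty_iff {I : Finset α} {f : α →₀ ℕ} :
    badSet I f = ∅ ↔ (∀ i, f i ≤ 1) ∧ Disjoint I f.support := by
  simp only [Finset.eq_empty_iff_forall_notMem, mem_badSet, Finset.disjoint_left,
    Finsupp.mem_support_iff, ← forall_and]
  refine forall_congr' fun i => ?_
  by_cases hi : i ∈ I <;> simp [hi] <;> omega

theorem badSet_erase_add_single {I : Finset α} {f : α →₀ ℕ} {i : α} (hi : i ∈ I) :
    badSet (I.erase i) (f + single i 1) = badSet I f := by
  ext j
  by_cases hj : j = i
  · subst hj; simp [mem_badSet, hi]; omega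
  · simp [mem_badSet, hj]

theorem badSet_eq_empty_and_support_eq_iff {I L : Finset α} (h : Disjoint I L)
    {f : α →₀ ℕ} : (badSet I f = ∅ ∧ f.support = L) ↔ f = sqfreeExp L := by
  constructor
  · rintro ⟨hbad, rfl⟩
    ext i
    have := (badSet_eq_empty_iff.mp hbad).1 i
    simp only [sqfreeExp_apply, Finsupp.mem_support_iff]
    split_ifs <;> omega
  · rintro rfl
    refine ⟨badSet_eq_empty_iff.mpr ⟨fun i => ?_, by simpa using h⟩, support_sqfreeExp L⟩
    simp only [sqfreeExp_apply]; split_ifs <;> omega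

theorem disjoint_and_badSet_union_add_eq_empty_iff {I J : Finset α} {f g : α →₀ ℕ} :
    (Disjoint I J ∧ badSet (I ∪ J) (f + g) = ∅) ↔
      badSet I f = ∅ ∧ badSet J g = ∅ ∧ Disjoint (I ∪ f.support) (J ∪ g.support) := by
  simp only [Finset.eq_empty_iff_forall_notMem, mem_badSet, Finset.disjoint_left,
    Finsupp.mem_support_iff, Finset.mem_union, Finsupp.add_apply, ← forall_and]
  refine forall_congr' fun i => ?_
  by_cases hI : i ∈ I <;> by_cases hJ : i ∈ J <;> simp [hI, hJ] <;> omega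

end Exponents

section Signs

variable {R α : Type*} [Ring R] [LinearOrder α]

theorem neg_one_pow_add_neg_one_pow_of_odd {x y : ℕ} (h : Odd (x + y)) :
    (-1 : R) ^ x + (-1) ^ y = 0 := by
  rcases Nat.even_or_odd x with hx | hx
  · rw [hx.neg_one_pow, ((Nat.odd_add'.mp h).mpr hx).neg_one_pow, add_neg_cancel]
  · rw [hx.neg_one_pow, ((Nat.odd_add.mp h).mp hx).neg_one_pow, neg_add_cancel]

def dSign (I : Finset α) (i : α) : R := (-1) ^ ((I.filter fun j => j ≤ i).card + 1)

theorem dSign_mul_self (I : Finset α) (i : α) : dSign I i * dSign I i = (1 : R) := by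
  rw [dSign, ← pow_add, ← two_mul, pow_mul, neg_one_sq, one_pow]

theorem card_filter_le_insert {I : Finset α} {b : α} (hb : b ∉ I) (i : α) :
    ((insert b I).filter fun j => j ≤ i).card =
      (I.filter fun j => j ≤ i).card + if b ≤ i then 1 else 0 := by
  rw [Finset.filter_insert]
  split_ifs
  · exact Finset.card_insert_of_notMem fun h => hb (Finset.mem_filter.mp h).1
  · rfl

theorem card_filter_le_erase {I : Finset α} {i : α} (hi : i ∈ I) (b : α) :
    ((I.erase i).filter fun j => j ≤ b).card + (if i ≤ b then 1 else 0) =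
      (I.filter fun j => j ≤ b).card := by
  rw [Finset.filter_erase]
  split_ifs with h
  · exact Finset.card_erase_add_one (Finset.mem_filter.mpr ⟨hi, h⟩)
  · have hib : i ∉ I.filter fun j => j ≤ b := fun h' => h (Finset.mem_filter.mp h').2
    rw [Finset.erase_eq_of_notMem hib, add_zero]

/-- Makes the terms of `d h + h d` indexed by `i ≠ b` cancel in the contracting homotopy below. -/
theorem dSign_insert_mul_add_dSign_mul {I : Finset α} {b i : α} (hb : b ∉ I) (hi : i ∈ I) :
    dSign (insert b I) b * dSign (insert b I) i + dSign I i * dSign (insert b (I.erase i)) b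
      = (0 : R) := by
  simp only [dSign, ← pow_add]
  apply neg_one_pow_add_neg_one_pow_of_odd
  have hbI := card_filter_le_insert hb b
  have hbi := card_filter_le_insert hb i
  have hbE := card_filter_le_insert (I := I.erase i) (fun h => hb (Finset.mem_of_mem_erase h)) b
  have hE := card_filter_le_erase hi b
  have hne : i ≠ b := fun h => hb (h ▸ hi)
  rw [Nat.odd_iff]
  rcases hne.lt_or_gt with h | h <;>
  · simp only [le_refl, if_true, h.le, not_le.mpr h, if_false] at hbI hbi hbE hE
    omega

end Signs

variable {k m K}

theorem dLSR_single (I : Finset (Fin m)) (f : Fin m →₀ ℕ) (c : k) :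
    dLSR k m K (single (I, f) c) = c • ∑ i ∈ I,
      if K (insert i f.support) then single (I.erase i, f + single i 1) (dSign I i) else 0 :=
  lift_single_apply _ _ _

theorem dRbar_single (I L : Finset (Fin m)) (c : k) :
    dRbar k m K (single (I, L) c) = c • ∑ i ∈ I,
      if i ∉ L ∧ K (insert i L) then single (I.erase i, insert i L) (dSign I i) else 0 :=
  lift_single_apply _ _ _

theorem qMap_single (I : Finset (Fin m)) (f : Fin m →₀ ℕ) (c : k) :
    qMap k m (single (I, f) c) = if badSet I f = ∅ then single (I, f.support) c else 0 := by
  rw [qMap, lift_single_apply]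
  simp only [← badSet_eq_empty_iff]
  split_ifs <;> simp

theorem mulLSR_single_one (I J : Finset (Fin m)) (f g : Fin m →₀ ℕ) :
    mulLSR k m K (single (I, f) 1) (single (J, g) 1) =
      if Disjoint I J ∧ K (f + g).support then
        single (I ∪ J, f + g) ((-1 : k) ^ invCount m I J) else 0 := by
  simp only [mulLSR, lift_single_apply, one_smul]

theorem mulRbar_single_one (I J L M : Finset (Fin m)) :
    mulRbar k m K (single (I, L) 1) (single (J, M) 1) =
      if Disjoint (I ∪ L) (J ∪ M) ∧ K (L ∪ M) then
        single (I ∪ J, L ∪ M) ((-1 : k) ^ invCount m I J) else 0 := by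
  simp only [mulRbar, lift_single_apply, one_smul]

theorem qMap_comp_dLSR : (qMap k m).comp (dLSR k m K) = (dRbar k m K).comp (qMap k m) := by
  refine Finsupp.lhom_ext fun ⟨I, f⟩ c => ?_
  simp only [LinearMap.comp_apply, dLSR_single, map_smul, map_sum, apply_ite (qMap k m),
    map_zero, qMap_single]
  by_cases hf : badSet I f = ∅
  · rw [if_pos hf, dRbar_single]
    refine congrArg _ (Finset.sum_congr rfl fun i hi => ?_)
    have hfi : i ∉ f.support := fun h' => Finset.notMem_empty i
      (hf ▸ mem_badSet.mpr ⟨Finsupp.mem_support_iff.mp h', Or.inr hi⟩)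
    simp [badSet_erase_add_single hi, hf, hfi, support_add_single_one]
  · rw [if_neg hf, map_zero, Finset.sum_eq_zero fun i hi => by
      simp [badSet_erase_add_single hi, hf], smul_zero]

theorem qMap_mulLSR_single_one (p q : Finset (Fin m) × (Fin m →₀ ℕ)) :
    qMap k m (mulLSR k m K (single p 1) (single q 1)) =
      mulRbar k m K (qMap k m (single p 1)) (qMap k m (single q 1)) := by
  obtain ⟨I, f⟩ := p
  obtain ⟨J, g⟩ := q
  have key := disjoint_and_badSet_union_add_eq_empty_iff (I := I) (J := J) (f := f) (g := g)
  simp only [mulLSR_single_one, qMap_single, apply_ite (qMap k m), map_zero]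
  split_ifs <;> simp_all [mulRbar_single_one, Finsupp.support_add_eq_union]

abbrev lsrMonomials (K : Finset (Fin m) → Prop) : Set (Finset (Fin m) × (Fin m →₀ ℕ)) :=
  {p | K p.2.support}

abbrev rbarMonomials (K : Finset (Fin m) → Prop) : Set (Finset (Fin m) × Finset (Fin m)) :=
  {p | Disjoint p.1 p.2 ∧ K p.2}

theorem qMap_mem_supported {K : Finset (Fin m) → Prop} {x : LSRMod k m}
    (hx : x ∈ Finsupp.supported k k (lsrMonomials K)) :
    qMap k m x ∈ Finsupp.supported k k (rbarMonomials K) := by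
  refine Finsupp.apply_mem_of_mem_supported (fun ⟨I, f⟩ hK => ?_) hx
  rw [qMap_single]
  split_ifs with hf
  · exact Finsupp.single_mem_supported k _ ⟨(badSet_eq_empty_iff.mp hf).2, hK⟩
  · exact Submodule.zero_mem _

theorem qMap_apply_of_disjoint (x : LSRMod k m) {I L : Finset (Fin m)} (h : Disjoint I L) :
    qMap k m x (I, L) = x (I, sqfreeExp L) := by
  suffices (Finsupp.lapply (I, L)).comp (qMap k m) = Finsupp.lapply (I, sqfreeExp L) from
    LinearMap.congr_fun this x
  refine Finsupp.lhom_ext fun ⟨J, f⟩ c => ?_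
  simp only [LinearMap.comp_apply, Finsupp.lapply_apply, qMap_single]
  have key := badSet_eq_empty_and_support_eq_iff h (f := f)
  split_ifs with hf
  · by_cases hJ : J = I
    · subst hJ
      by_cases hfL : f.support = L
      · simp [key.mp ⟨hf, hfL⟩]
      · have hf' : f ≠ sqfreeExp L := fun h' => hfL (key.mpr h').2
        simp [hfL, hf']
    · simp [hJ]
  · simp only [Finsupp.zero_apply, Finsupp.single_apply, Prod.mk.injEq]
    rw [if_neg fun ⟨hJ, h'⟩ => hf (hJ ▸ key.mpr h').1]

theorem mem_supported_badSet_of_qMap_eq_zero {K : Finset (Fin m) → Prop} {u : LSRMod k m}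
    (hu : u ∈ Finsupp.supported k k (lsrMonomials K)) (hq : qMap k m u = 0) :
    u ∈ Finsupp.supported k k {p | (badSet p.1 p.2).Nonempty ∧ K p.2.support} := by
  intro p hp
  refine ⟨Finset.nonempty_iff_ne_empty.mpr fun hbad => Finsupp.mem_support_iff.mp hp ?_, hu hp⟩
  have hp2 : p.2 = sqfreeExp p.2.support :=
    (badSet_eq_empty_and_support_eq_iff (badSet_eq_empty_iff.mp hbad).2).mp ⟨hbad, rfl⟩
  rw [← Prod.mk.eta (p := p), hp2, ← qMap_apply_of_disjoint u (badSet_eq_empty_iff.mp hbad).2,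
    hq, Finsupp.zero_apply]

noncomputable def rbarToLSR (k : Type) [CommRing k] (m : ℕ) : RbarMod k m →ₗ[k] LSRMod k m :=
  Finsupp.lmapDomain k k fun p => (p.1, sqfreeExp p.2)

theorem rbarToLSR_single (I L : Finset (Fin m)) (c : k) :
    rbarToLSR k m (single (I, L) c) = single (I, sqfreeExp L) c :=
  Finsupp.mapDomain_single

theorem rbarToLSR_mem_supported {K : Finset (Fin m) → Prop} {y : RbarMod k m}
    (hy : y ∈ Finsupp.supported k k (rbarMonomials K)) :
    rbarToLSR k m y ∈ Finsupp.supported k k (lsrMonomials K) := by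
  refine Finsupp.apply_mem_of_mem_supported (fun ⟨I, L⟩ h => ?_) hy
  rw [rbarToLSR_single]
  exact Finsupp.single_mem_supported k _ (by simpa [lsrMonomials] using h.2)

theorem qMap_rbarToLSR {y : RbarMod k m}
    (hy : y ∈ Finsupp.supported k k {p : Finset (Fin m) × Finset (Fin m) | Disjoint p.1 p.2}) :
    qMap k m (rbarToLSR k m y) = y := by
  refine Finsupp.eqOn_supported (F := (qMap k m).comp (rbarToLSR k m)) (G := LinearMap.id)
    (fun ⟨I, L⟩ h => ?_) hy
  rw [LinearMap.comp_apply, rbarToLSR_single, qMap_single, support_sqfreeExp,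
    if_pos ((badSet_eq_empty_and_support_eq_iff h).mpr rfl).1, LinearMap.id_apply]

theorem dLSR_rbarToLSR {y : RbarMod k m}
    (hy : y ∈ Finsupp.supported k k {p : Finset (Fin m) × Finset (Fin m) | Disjoint p.1 p.2}) :
    dLSR k m K (rbarToLSR k m y) = rbarToLSR k m (dRbar k m K y) := by
  refine Finsupp.eqOn_supported (F := (dLSR k m K).comp (rbarToLSR k m))
    (G := (rbarToLSR k m).comp (dRbar k m K)) (fun ⟨I, L⟩ h => ?_) hy
  simp only [LinearMap.comp_apply, rbarToLSR_single, dLSR_single, dRbar_single, one_smul,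
    support_sqfreeExp, map_sum, apply_ite (rbarToLSR k m), map_zero]
  refine Finset.sum_congr rfl fun i hi => ?_
  have hiL : i ∉ L := Finset.disjoint_left.mp h hi
  simp [hiL, sqfreeExp_add_single hiL]

noncomputable def lsrHomotopy (k : Type) [CommRing k] (m : ℕ) : LSRMod k m →ₗ[k] LSRMod k m :=
  Finsupp.lift _ k _ fun p =>
    if hb : (badSet p.1 p.2).Nonempty then
      let b := (badSet p.1 p.2).min' hb
      if b ∈ p.1 then 0 else single (insert b p.1, p.2 - single b 1) (dSign (insert b p.1) b)
    else 0

theorem lsrHomotopy_single_of_isLeast {I : Finset (Fin m)} {f : Fin m →₀ ℕ} {b : Fin m}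
    (hb : IsLeast (badSet I f : Set (Fin m)) b) (c : k) :
    lsrHomotopy k m (single (I, f) c) = c • if b ∈ I then 0
      else single (insert b I, f - single b 1) (dSign (insert b I) b) := by
  have hne : (badSet I f).Nonempty := ⟨b, hb.1⟩
  rw [lsrHomotopy, lift_single_apply, dif_pos hne,
    (Finset.isLeast_min' _ hne).unique hb]

theorem lsrHomotopy_mem_supported {K : Finset (Fin m) → Prop} {u : LSRMod k m}
    (hu : u ∈ Finsupp.supported k k (lsrMonomials K)) :
    lsrHomotopy k m u ∈ Finsupp.supported k k (lsrMonomials K) := by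
  refine Finsupp.apply_mem_of_mem_supported (fun ⟨I, f⟩ hK => ?_) hu
  by_cases hne : (badSet I f).Nonempty
  · have hb := Finset.isLeast_min' _ hne
    rw [lsrHomotopy_single_of_isLeast hb, one_smul]
    split_ifs with hbI
    · exact Submodule.zero_mem _
    · have hfb : 2 ≤ f ((badSet I f).min' hne) := (mem_badSet.mp hb.1).2.resolve_right hbI
      refine Finsupp.single_mem_supported k _ ?_
      simpa [lsrMonomials, support_tsub_single_one hfb] using hK
  · rw [lsrHomotopy, lift_single_apply, dif_neg hne, smul_zero]
    exact Submodule.zero_mem _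

theorem lsrHomotopy_dLSR_single {I : Finset (Fin m)} {f : Fin m →₀ ℕ} {b : Fin m}
    (hb : IsLeast (badSet I f : Set (Fin m)) b) :
    lsrHomotopy k m (dLSR k m K (single (I, f) 1)) = ∑ i ∈ I,
      if K (insert i f.support) then (dSign I i : k) • (if b ∈ I.erase i then 0 else
        single (insert b (I.erase i), f + single i 1 - single b 1)
          (dSign (insert b (I.erase i)) b)) else 0 := by
  rw [dLSR_single, one_smul, map_sum]
  refine Finset.sum_congr rfl fun i hi => ?_
  rw [apply_ite (lsrHomotopy k m), map_zero,
    lsrHomotopy_single_of_isLeast (by rwa [badSet_erase_add_single hi])]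

theorem dLSR_lsrHomotopy_add_lsrHomotopy_dLSR_of_mem {I : Finset (Fin m)} {f : Fin m →₀ ℕ}
    {b : Fin m} (hK : K f.support) (hb : IsLeast (badSet I f : Set (Fin m)) b) (hbI : b ∈ I) :
    dLSR k m K (lsrHomotopy k m (single (I, f) 1)) +
      lsrHomotopy k m (dLSR k m K (single (I, f) 1)) = single (I, f) 1 := by
  have hfb : b ∈ f.support := (Finset.mem_filter.mp hb.1).1
  rw [lsrHomotopy_single_of_isLeast hb, if_pos hbI, smul_zero, map_zero, zero_add,
    lsrHomotopy_dLSR_single hb, Finset.sum_eq_single_of_mem b hbI fun i _ hib => by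
      simp [Finset.mem_erase, Ne.symm hib, hbI],
    if_pos (by rwa [Finset.insert_eq_of_mem hfb]), if_neg (Finset.notMem_erase b I),
    Finset.insert_erase hbI, add_tsub_cancel_right, smul_single, smul_eq_mul, dSign_mul_self]

theorem dLSR_lsrHomotopy_add_lsrHomotopy_dLSR_of_notMem {I : Finset (Fin m)} {f : Fin m →₀ ℕ}
    {b : Fin m} (hK : K f.support) (hb : IsLeast (badSet I f : Set (Fin m)) b) (hbI : b ∉ I) :
    dLSR k m K (lsrHomotopy k m (single (I, f) 1)) +
      lsrHomotopy k m (dLSR k m K (single (I, f) 1)) = single (I, f) 1 := by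
  have hfb : 2 ≤ f b := (mem_badSet.mp hb.1).2.resolve_right hbI
  have hle : single b 1 ≤ f := Finsupp.single_le_iff.mpr (by omega)
  have hKb : K (insert b f.support) := by
    rwa [Finset.insert_eq_of_mem (Finsupp.mem_support_iff.mpr (by omega))]
  rw [lsrHomotopy_single_of_isLeast hb, if_neg hbI, one_smul, dLSR_single,
    support_tsub_single_one hfb, Finset.sum_insert hbI, if_pos hKb, Finset.erase_insert hbI,
    tsub_add_cancel_of_le hle, smul_add, smul_single, smul_eq_mul, dSign_mul_self, add_assoc,
    add_eq_left, lsrHomotopy_dLSR_single hb, Finset.smul_sum, ← Finset.sum_add_distrib]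
  refine Finset.sum_eq_zero fun i hi => ?_
  have hib : i ≠ b := fun h => hbI (h ▸ hi)
  split_ifs with hKi hbi
  · exact absurd (Finset.mem_of_mem_erase hbi) hbI
  · rw [Finset.erase_insert_of_ne hib.symm, tsub_add_eq_add_tsub hle, smul_single, smul_single,
      smul_eq_mul, smul_eq_mul, ← single_add, dSign_insert_mul_add_dSign_mul hbI hi, single_zero]
  · simp

theorem dLSR_lsrHomotopy_add_lsrHomotopy_dLSR {u : LSRMod k m}
    (hu : u ∈ Finsupp.supported k k {p | (badSet p.1 p.2).Nonempty ∧ K p.2.support}) :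
    dLSR k m K (lsrHomotopy k m u) + lsrHomotopy k m (dLSR k m K u) = u := by
  refine Finsupp.eqOn_supported
    (F := (dLSR k m K).comp (lsrHomotopy k m) + (lsrHomotopy k m).comp (dLSR k m K))
    (G := LinearMap.id) (fun ⟨I, f⟩ ⟨hne, hK⟩ => ?_) hu
  have hb := Finset.isLeast_min' _ hne
  by_cases hbI : (badSet I f).min' hne ∈ I
  · exact dLSR_lsrHomotopy_add_lsrHomotopy_dLSR_of_mem hK hb hbI
  · exact dLSR_lsrHomotopy_add_lsrHomotopy_dLSR_of_notMem hK hb hbI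

theorem exists_dLSR_eq_of_qMap_eq_zero {u : LSRMod k m}
    (hu : u ∈ Finsupp.supported k k (lsrMonomials K)) (hq : qMap k m u = 0)
    (hd : dLSR k m K u = 0) : ∃ w ∈ Finsupp.supported k k (lsrMonomials K), dLSR k m K w = u :=
  ⟨lsrHomotopy k m u, lsrHomotopy_mem_supported hu, by
    simpa [hd] using
      dLSR_lsrHomotopy_add_lsrHomotopy_dLSR (mem_supported_badSet_of_qMap_eq_zero hu hq)⟩

variable (k m K)

theorem quotient_map_is_dga_quasi_iso :
    -- q is a chain map
    (qMap k m).comp (dLSR k m K) = (dRbar k m K).comp (qMap k m) ∧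
    -- q is multiplicative
    (∀ p q : Finset (Fin m) × (Fin m →₀ ℕ),
      qMap k m (mulLSR k m K (Finsupp.single p 1) (Finsupp.single q 1)) =
        mulRbar k m K (qMap k m (Finsupp.single p 1)) (qMap k m (Finsupp.single q 1))) ∧
    -- q is surjective on cohomology
    (∀ y ∈ Finsupp.supported k k {p : Finset (Fin m) × Finset (Fin m) |
        Disjoint p.1 p.2 ∧ K p.2},
      dRbar k m K y = 0 →
      ∃ x ∈ Finsupp.supported k k {p : Finset (Fin m) × (Fin m →₀ ℕ) | K p.2.support},
        dLSR k m K x = 0 ∧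
        ∃ z ∈ Finsupp.supported k k {p : Finset (Fin m) × Finset (Fin m) |
            Disjoint p.1 p.2 ∧ K p.2},
          qMap k m x - y = dRbar k m K z) ∧
    -- q is injective on cohomology
    (∀ x ∈ Finsupp.supported k k {p : Finset (Fin m) × (Fin m →₀ ℕ) | K p.2.support},
      dLSR k m K x = 0 →
      (∃ z ∈ Finsupp.supported k k {p : Finset (Fin m) × Finset (Fin m) |
          Disjoint p.1 p.2 ∧ K p.2}, qMap k m x = dRbar k m K z) →
      ∃ w ∈ Finsupp.supported k k {p : Finset (Fin m) × (Fin m →₀ ℕ) | K p.2.support},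
        dLSR k m K w = x) := by
  have hdisj : ∀ y ∈ Finsupp.supported k k (rbarMonomials K),
      y ∈ Finsupp.supported k k {p : Finset (Fin m) × Finset (Fin m) | Disjoint p.1 p.2} :=
    fun _ hy => Finsupp.supported_mono (s := rbarMonomials K) (fun _ hp => hp.1) hy
  have hj : ∀ y ∈ Finsupp.supported k k (rbarMonomials K),
      rbarToLSR k m y ∈ Finsupp.supported k k (lsrMonomials K) :=
    fun _ hy => rbarToLSR_mem_supported hy
  have hdj : ∀ y ∈ Finsupp.supported k k (rbarMonomials K),
      dLSR k m K (rbarToLSR k m y) = rbarToLSR k m (dRbar k m K y) :=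
    fun y hy => dLSR_rbarToLSR (hdisj y hy)
  have hqj : ∀ y ∈ Finsupp.supported k k (rbarMonomials K), qMap k m (rbarToLSR k m y) = y :=
    fun y hy => qMap_rbarToLSR (hdisj y hy)
  refine ⟨qMap_comp_dLSR, qMap_mulLSR_single_one, ?_, ?_⟩
  · exact exists_cycle_map_sub_eq_boundary_of_section hj hdj hqj
  · exact exists_boundary_of_map_eq_boundary qMap_comp_dLSR
      (fun _ hx => qMap_mem_supported hx) hj hdj hqj
      (fun _ hu hq hd => exists_dLSR_eq_of_qMap_eq_zero hu hq hd)
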